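/- arXiv:1402.3239 — 2 statements merged into one kernel-verified Lean document; each statement's English description precedes it below -/
import Mathlib

section
/- Let r ≥ 2, p > 1, and let G be a K_{r+1}-free graph of order n. If λ^(p)(G) = (1 - 1/r) n^(2 - 2/p), then r divides n and G is the Turán graph T_r(n). -/
/-!
Let `x` attain `λ^(p)(G)`, and put `y = |x|`, `S = ∑ yᵢ`. By the Motzkin–Straus inequality,
`λ^(p)(G) ≤ yᵀAy ≤ (1 - 1/r) S²`, and by the power-mean inequality `S ≤ n^(1 - 1/p)`. Equality
therefore holds throughout. Equality in the power-mean inequality makes `y` constant, so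
`yᵀAy = (S/n)² · 2e(G)`, which gives `2e(G) = (1 - 1/r) n²`. This is the Turán bound, so `G` is
Turán-maximal and hence `G ≅ T_r(n)`. The Turán graph meets the bound `(1 - 1/r) n²/2` exactly only
when `r ∣ n`.
-/

open Finset

open scoped Classical

/-- The p-spectral radius of a graph `G`:
`λ^(p)(G) = max { 2 ∑_{{i,j}∈E(G)} x_i x_j : ∑ |x_i|^p = 1 }`,
where the quadratic form is written as `∑ i ∑ j, if G.Adj i j then x i * x j else 0`. -/

noncomputable def pSpec {V : Type*} [Fintype V] (G : SimpleGraph V) (p : ℝ) : ℝ :=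
  sSup {y : ℝ | ∃ x : V → ℝ, (∑ i, |x i| ^ p) = 1 ∧
    y = ∑ i, ∑ j, if G.Adj i j then x i * x j else 0}

open Matrix

lemma eq_sum_div_card_of_rpow_sum_eq {ι : Type*} [Fintype ι] [Nonempty ι] {p : ℝ} (hp : 1 < p)
    {y : ι → ℝ} (hy : 0 ≤ y)
    (h : (∑ i, y i) ^ p = (Fintype.card ι : ℝ) ^ (p - 1) * ∑ i, y i ^ p) (j : ι) :
    y j = (∑ i, y i) / Fintype.card ι := by
  have hn : (0 : ℝ) < Fintype.card ι := by exact_mod_cast Fintype.card_pos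
  have hw : ∑ _i : ι, (Fintype.card ι : ℝ)⁻¹ = 1 := by simp [hn.ne']
  have hjensen := (strictConvexOn_rpow hp).map_sum_eq_iff (t := univ) (p := y)
    (fun _ _ => inv_pos.2 hn) hw fun i _ => Set.mem_Ici.2 (hy i)
  simp only [smul_eq_mul, ← mul_sum] at hjensen
  rw [inv_mul_eq_div] at hjensen
  refine hjensen.1 ?_ j (mem_univ j)
  rw [Real.div_rpow (sum_nonneg fun i _ => hy i) hn.le, h, Real.rpow_sub_one hn.ne']
  field_simp

lemma sum_le_card_rpow_of_sum_rpow_eq_one {ι : Type*} [Fintype ι] {p : ℝ} (hp : 1 ≤ p)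
    {y : ι → ℝ} (hy : 0 ≤ y) (h : ∑ i, y i ^ p = 1) :
    ∑ i, y i ≤ (Fintype.card ι : ℝ) ^ (1 - 1 / p) := by
  have hp0 : 0 < p := zero_lt_one.trans_le hp
  rw [← Real.rpow_le_rpow_iff (sum_nonneg fun i _ => hy i) (by positivity) hp0,
    ← Real.rpow_mul (Nat.cast_nonneg _), sub_mul, one_div_mul_cancel hp0.ne', one_mul]
  simpa [h] using Real.rpow_sum_le_const_mul_sum_rpow_of_nonneg (s := univ) hp fun i _ => hy i

lemma eq_sum_div_card_of_sum_rpow_eq_one {ι : Type*} [Fintype ι] [Nonempty ι] {p : ℝ}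
    (hp : 1 < p) {y : ι → ℝ} (hy : 0 ≤ y) (h₁ : ∑ i, y i ^ p = 1)
    (h₂ : ∑ i, y i = (Fintype.card ι : ℝ) ^ (1 - 1 / p)) (j : ι) :
    y j = (∑ i, y i) / Fintype.card ι := by
  refine eq_sum_div_card_of_rpow_sum_eq hp hy ?_ j
  rw [h₁, mul_one, h₂, ← Real.rpow_mul (Nat.cast_nonneg _), sub_mul,
    one_div_mul_cancel (zero_lt_one.trans hp).ne', one_mul]

namespace SimpleGraph

lemma IsClique.card_le_of_cliqueFree {V : Type*} {G : SimpleGraph V} {r : ℕ}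
    (hG : G.CliqueFree (r + 1)) {s : Finset V} (hs : G.IsClique (s : Set V)) : #s ≤ r := by
  by_contra! h
  obtain ⟨t, hts, ht⟩ := exists_subset_card_eq (Nat.succ_le_of_lt h)
  exact hG t ⟨hs.subset (by exact_mod_cast hts), ht⟩

section QuadraticForm

variable {V : Type*} [Fintype V] {G : SimpleGraph V} [DecidableRel G.Adj]

lemma dotProduct_adjMatrix_mulVec_nonneg {y : V → ℝ} (hy : 0 ≤ y) :
    0 ≤ y ⬝ᵥ G.adjMatrix ℝ *ᵥ y := by
  rw [dotProduct_mulVec_adjMatrix]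
  refine sum_nonneg fun i _ => sum_nonneg fun j _ => ?_
  split_ifs
  · exact mul_nonneg (hy i) (hy j)
  · rfl

lemma dotProduct_adjMatrix_mulVec_add_compl (y : V → ℝ) :
    y ⬝ᵥ G.adjMatrix ℝ *ᵥ y + y ⬝ᵥ Gᶜ.adjMatrix ℝ *ᵥ y = (∑ i, y i) ^ 2 - ∑ i, y i ^ 2 := by
  have h := G.one_add_adjMatrix_add_compl_adjMatrix_eq_of_one ℝ
  rw [compl_adjMatrix_eq_adjMatrix_compl] at h
  have h2 := congrArg (fun M : Matrix V V ℝ => y ⬝ᵥ M *ᵥ y) h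
  simp only [add_mulVec, dotProduct_add, one_mulVec] at h2
  rw [sq, Finset.sum_mul_sum]
  simp [dotProduct, mulVec, Finset.mul_sum, sq] at h2 ⊢
  linarith

lemma dotProduct_adjMatrix_mulVec_add_smul_single_sub_single {u v : V}
    (hadj : ¬G.Adj u v) (y : V → ℝ) (t : ℝ) :
    let z := y + t • (Pi.single u 1 - Pi.single v 1)
    z ⬝ᵥ G.adjMatrix ℝ *ᵥ z =
      y ⬝ᵥ G.adjMatrix ℝ *ᵥ y + 2 * t * ((G.adjMatrix ℝ *ᵥ y) u - (G.adjMatrix ℝ *ᵥ y) v) := by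
  set A := G.adjMatrix ℝ
  set d : V → ℝ := Pi.single u 1 - Pi.single v 1
  have hsymm : y ⬝ᵥ A *ᵥ d = d ⬝ᵥ A *ᵥ y := by
    rw [dotProduct_mulVec, ← mulVec_transpose, transpose_adjMatrix, dotProduct_comm]
  have hdy : d ⬝ᵥ A *ᵥ y = (A *ᵥ y) u - (A *ᵥ y) v := by
    simp only [d, sub_dotProduct, single_dotProduct, one_mul]
  have hdd : d ⬝ᵥ A *ᵥ d = 0 := by
    simp [d, A, mulVec_sub, sub_dotProduct, dotProduct_sub, hadj, G.adj_comm v u]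
  simp only [mulVec_add, add_dotProduct, dotProduct_add, mulVec_smul, smul_dotProduct,
    dotProduct_smul, hsymm, hdy, hdd, smul_eq_mul]
  ring

lemma dotProduct_adjMatrix_mulVec_le_of_isClique_support {r : ℕ} (hG : G.CliqueFree (r + 1))
    {y : V → ℝ} (hy : 0 ≤ y) (hclique : G.IsClique (Function.support y)) :
    y ⬝ᵥ G.adjMatrix ℝ *ᵥ y ≤ (1 - 1 / r) * (∑ i, y i) ^ 2 := by
  have hcard : #{i | y i ≠ 0} ≤ r := IsClique.card_le_of_cliqueFree hG (by rwa [coe_filter_univ])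
  have hCS : (∑ i, y i) ^ 2 ≤ r * ∑ i, y i ^ 2 :=
    calc (∑ i, y i) ^ 2 = (∑ i ∈ {i | y i ≠ 0}, y i) ^ 2 := by rw [sum_filter_ne_zero]
      _ ≤ #{i | y i ≠ 0} * ∑ i ∈ {i | y i ≠ 0}, y i ^ 2 := sq_sum_le_card_mul_sum_sq
      _ ≤ r * ∑ i, y i ^ 2 :=
        mul_le_mul (by exact_mod_cast hcard) (sum_le_univ_sum_of_nonneg fun i => sq_nonneg _)
          (sum_nonneg fun i _ => sq_nonneg _) r.cast_nonneg
  have hdiv : (∑ i, y i) ^ 2 / r ≤ ∑ i, y i ^ 2 :=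
    div_le_of_le_mul₀ (Nat.cast_nonneg r) (sum_nonneg fun i _ => sq_nonneg _) (by linarith)
  have hcompl := dotProduct_adjMatrix_mulVec_add_compl (G := G) y
  have hnonneg := dotProduct_adjMatrix_mulVec_nonneg (G := Gᶜ) hy
  rw [sub_mul, one_mul, one_div_mul_eq_div]
  linarith

lemma exists_support_card_lt_of_not_adj {y : V → ℝ} (hy : 0 ≤ y) {u v : V} (huv : u ≠ v)
    (hadj : ¬G.Adj u v) (hu : y u ≠ 0) (hv : y v ≠ 0) :
    ∃ z : V → ℝ, 0 ≤ z ∧ ∑ i, z i = ∑ i, y i ∧ #{i | z i ≠ 0} < #{i | y i ≠ 0} ∧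
      y ⬝ᵥ G.adjMatrix ℝ *ᵥ y ≤ z ⬝ᵥ G.adjMatrix ℝ *ᵥ z := by
  wlog hW : (G.adjMatrix ℝ *ᵥ y) v ≤ (G.adjMatrix ℝ *ᵥ y) u generalizing u v
  · exact this huv.symm (fun h => hadj h.symm) hv hu (le_of_not_ge hW)
  refine ⟨y + y v • (Pi.single u 1 - Pi.single v 1), fun i => ?_, ?_, ?_, ?_⟩
  · rcases eq_or_ne i u with rfl | hiu
    · simpa [huv] using add_nonneg (hy i) (hy v)
    · rcases eq_or_ne i v with rfl | hiv
      · simp [hiu]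
      · simpa [hiu, hiv] using hy i
  · simp [sum_add_distrib, ← Finset.mul_sum, sum_sub_distrib]
  · refine (card_le_card (t := ({i | y i ≠ 0} : Finset V).erase v) fun i => ?_).trans_lt
      (card_erase_lt_of_mem (by simpa using hv))
    rcases eq_or_ne i u with rfl | hiu
    · simp [huv, hu]
    · rcases eq_or_ne i v with rfl | hiv
      · simp [hiu]
      · simp [hiu, hiv]
  · rw [dotProduct_adjMatrix_mulVec_add_smul_single_sub_single hadj]
    nlinarith [mul_nonneg (hy v) (sub_nonneg.2 hW)]

/-- **Motzkin–Straus.** Moving weight between two non-adjacent vertices of the support towards the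
one with the larger entry of `A y` does not decrease the form, so the support may be assumed to be
a clique. -/
theorem CliqueFree.dotProduct_adjMatrix_mulVec_le {r : ℕ} (hG : G.CliqueFree (r + 1))
    {y : V → ℝ} (hy : 0 ≤ y) : y ⬝ᵥ G.adjMatrix ℝ *ᵥ y ≤ (1 - 1 / r) * (∑ i, y i) ^ 2 := by
  induction hk : #{i | y i ≠ 0} using Nat.strong_induction_on generalizing y with
  | _ k ih =>
  by_cases hclique : G.IsClique (Function.support y)
  · exact dotProduct_adjMatrix_mulVec_le_of_isClique_support hG hy hclique
  obtain ⟨u, hu, v, hv, huv, hadj⟩ : ∃ u, y u ≠ 0 ∧ ∃ v, y v ≠ 0 ∧ u ≠ v ∧ ¬G.Adj u v := by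
    simpa [IsClique, Set.Pairwise] using hclique
  obtain ⟨z, hz, hsum, hcard, hle⟩ := exists_support_card_lt_of_not_adj hy huv hadj hu hv
  calc y ⬝ᵥ G.adjMatrix ℝ *ᵥ y ≤ z ⬝ᵥ G.adjMatrix ℝ *ᵥ z := hle
    _ ≤ (1 - 1 / r) * (∑ i, y i) ^ 2 := hsum ▸ ih _ (hk ▸ hcard) hz rfl

lemma dotProduct_adjMatrix_mulVec_const (a : ℝ) :
    (fun _ => a) ⬝ᵥ G.adjMatrix ℝ *ᵥ (fun _ => a) = a ^ 2 * (2 * #G.edgeFinset) := by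
  have h := congrArg (Nat.cast (R := ℝ)) G.sum_degrees_eq_twice_card_edges
  push_cast at h
  simp only [dotProduct, adjMatrix_mulVec_apply, sum_const, card_neighborFinset_eq_degree,
    nsmul_eq_mul, ← h, mul_sum]
  exact sum_congr rfl fun i _ => by ring

lemma dotProduct_adjMatrix_mulVec_le_abs (x : V → ℝ) :
    x ⬝ᵥ G.adjMatrix ℝ *ᵥ x ≤ (fun i => |x i|) ⬝ᵥ G.adjMatrix ℝ *ᵥ fun i => |x i| := by
  simp only [dotProduct_mulVec_adjMatrix]
  gcongr with i _ j _
  split_ifs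
  · exact (le_abs_self _).trans (abs_mul _ _).le
  · rfl

end QuadraticForm

lemma isTuranMaximal_of_two_mul_mul_card_edgeFinset_eq {V : Type*} [Fintype V]
    {G : SimpleGraph V} [DecidableRel G.Adj] {r : ℕ} (hr : 0 < r) (hG : G.CliqueFree (r + 1))
    (h : 2 * r * #G.edgeFinset = (r - 1) * Fintype.card V ^ 2) : G.IsTuranMaximal r := by
  refine ⟨hG, fun H _ hH => Nat.le_of_mul_le_mul_left ?_ (by positivity : 0 < 2 * r)⟩
  calc 2 * r * #H.edgeFinset ≤ 2 * r * #(turanGraph (Fintype.card V) r).edgeFinset := by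
        gcongr
        rw [card_edgeFinset_turanGraph]
        exact hH.card_edgeFinset_le
    _ ≤ (r - 1) * Fintype.card V ^ 2 := mul_card_edgeFinset_turanGraph_le
    _ = 2 * r * #G.edgeFinset := h.symm

lemma dvd_of_two_mul_mul_card_edgeFinset_turanGraph_eq {n r : ℕ} (hr : 0 < r)
    (h : 2 * r * #(turanGraph n r).edgeFinset = (r - 1) * n ^ 2) : r ∣ n := by
  -- with `s = n % r`, the edge formula gives `2r·e(T_r(n)) ≤ (r - 1)n² - s(r - s)`
  rw [card_edgeFinset_turanGraph] at h
  set s := n % r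
  have hsr : s < r := Nat.mod_lt n hr
  have hsn : s ≤ n := Nat.mod_le n r
  have h1 := Nat.mul_div_le ((n ^ 2 - s ^ 2) * (r - 1)) (2 * r)
  have h2 : 2 * s.choose 2 ≤ s * (s - 1) := by
    rw [Nat.choose_two_right]
    exact Nat.mul_div_le _ 2
  refine Nat.dvd_of_mod_eq_zero (Nat.eq_zero_of_not_pos fun hs : 0 < s => ?_)
  have key : (r - 1) * n ^ 2 ≤ (n ^ 2 - s ^ 2) * (r - 1) + r * (s * (s - 1)) := by
    rw [← h, mul_add]
    nlinarith
  have hs2n : s ^ 2 ≤ n ^ 2 := Nat.pow_le_pow_left hsn 2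
  zify [hr, hs, hs2n] at key hsr
  nlinarith [mul_pos (by exact_mod_cast hs : (0 : ℤ) < s) (sub_pos.2 hsr)]

end SimpleGraph

open SimpleGraph

theorem exists_eq_pSpec {V : Type*} [Fintype V] [Nonempty V] (G : SimpleGraph V) {p : ℝ}
    (hp : 0 < p) : ∃ x : V → ℝ, ∑ i, |x i| ^ p = 1 ∧ pSpec G p = x ⬝ᵥ G.adjMatrix ℝ *ᵥ x := by
  set K : Set (V → ℝ) := {x | ∑ i, |x i| ^ p = 1}
  have hK : IsCompact K := by
    refine Metric.isCompact_of_isClosed_isBounded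
      (isClosed_eq (by fun_prop (disch := exact hp.le)) continuous_const)
      ((Metric.isBounded_closedBall (x := 0) (r := 1)).subset fun x hx => ?_)
    rw [mem_closedBall_zero_iff, pi_norm_le_iff_of_nonneg zero_le_one]
    intro i
    have hle : |x i| ^ p ≤ 1 :=
      hx ▸ single_le_sum (f := fun j => |x j| ^ p) (fun j _ => by positivity) (mem_univ i)
    rw [Real.norm_eq_abs]
    exact le_of_not_gt fun hi => (Real.one_lt_rpow hi hp).not_ge hle
  obtain ⟨v⟩ := ‹Nonempty V›
  have hKne : K.Nonempty := ⟨Pi.single v 1, by simp [K, Pi.single_apply, apply_ite, hp.ne']⟩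
  obtain ⟨x, hxK, hx⟩ := (hK.image (f := fun x => x ⬝ᵥ G.adjMatrix ℝ *ᵥ x)
    (by fun_prop)).sSup_mem (hKne.image _)
  refine ⟨x, hxK, (congrArg sSup ?_).trans hx.symm⟩
  ext t
  simp [K, dotProduct_mulVec_adjMatrix, eq_comm]

theorem two_mul_mul_card_edgeFinset_eq_of_pSpec_eq {V : Type*} [Fintype V] [Nonempty V]
    {G : SimpleGraph V} {r : ℕ} (hr : 1 < r) {p : ℝ} (hp : 1 < p) (hG : G.CliqueFree (r + 1))
    (heq : pSpec G p = (1 - 1 / r) * (Fintype.card V : ℝ) ^ (2 - 2 / p)) :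
    2 * r * #G.edgeFinset = (r - 1) * Fintype.card V ^ 2 := by
  set n : ℝ := (Fintype.card V : ℝ)
  set c : ℝ := 1 - 1 / r
  have hn : 0 < n := Nat.cast_pos.2 Fintype.card_pos
  have hc : 0 < c := sub_pos.2 ((div_lt_one (by positivity)).2 (by exact_mod_cast hr))
  obtain ⟨x, hx, hQx⟩ := exists_eq_pSpec G (zero_lt_one.trans hp)
  set y : V → ℝ := fun i => |x i|
  have hy : 0 ≤ y := fun i => abs_nonneg (x i)
  set S := ∑ i, y i
  have hS0 : 0 ≤ S := sum_nonneg fun i _ => hy i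
  set N := n ^ (1 - 1 / p)
  have hN2 : N ^ 2 = n ^ (2 - 2 / p) := by
    rw [← Real.rpow_natCast, ← Real.rpow_mul hn.le]
    ring_nf
  have hSN : S ≤ N := sum_le_card_rpow_of_sum_rpow_eq_one hp.le hy hx
  have hchain : c * N ^ 2 ≤ y ⬝ᵥ G.adjMatrix ℝ *ᵥ y := by
    rw [hN2, ← heq, hQx]
    exact dotProduct_adjMatrix_mulVec_le_abs x
  have hMS : y ⬝ᵥ G.adjMatrix ℝ *ᵥ y ≤ c * S ^ 2 := hG.dotProduct_adjMatrix_mulVec_le hy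
  have hS : S = N := by
    refine le_antisymm hSN ((pow_le_pow_iff_left₀ (by positivity) hS0 two_ne_zero).1 ?_)
    exact le_of_mul_le_mul_left (hchain.trans hMS) hc
  have hconst : y = fun _ => S / n := funext (eq_sum_div_card_of_sum_rpow_eq_one hp hy hx hS)
  have hQy : y ⬝ᵥ G.adjMatrix ℝ *ᵥ y = c * S ^ 2 := le_antisymm hMS (hS ▸ hchain)
  rw [hconst, dotProduct_adjMatrix_mulVec_const] at hQy
  have hSpos : 0 < S := hS ▸ Real.rpow_pos_of_pos hn _
  have hcast : ((2 * r * #G.edgeFinset : ℕ) : ℝ) = ((r - 1) * Fintype.card V ^ 2 : ℕ) := by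
    push_cast [hr.le]
    simp only [c] at hQy
    field_simp at hQy
    linear_combination hQy
  exact_mod_cast hcast

theorem stmt8 {n : ℕ} (r : ℕ) (hr : 2 ≤ r) (p : ℝ) (hp : 1 < p)
    (G : SimpleGraph (Fin n)) (hG : G.CliqueFree (r + 1))
    (heq : pSpec G p = (1 - 1 / (r : ℝ)) * (n : ℝ) ^ (2 - 2 / p)) :
    r ∣ n ∧ Nonempty (G ≃g SimpleGraph.turanGraph n r) := by
  have hr0 : 0 < r := by omega
  have hedges : 2 * r * #G.edgeFinset = (r - 1) * n ^ 2 := by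
    rcases n.eq_zero_or_pos with rfl | hn
    · simp [Subsingleton.elim G ⊥]
    have : Nonempty (Fin n) := Fin.pos_iff_nonempty.1 hn
    simpa using two_mul_mul_card_edgeFinset_eq_of_pSpec_eq hr hp hG (by simpa using heq)
  obtain ⟨f⟩ := (isTuranMaximal_iff_nonempty_iso_turanGraph hr0).1
    (isTuranMaximal_of_two_mul_mul_card_edgeFinset_eq hr0 hG (by simpa using hedges))
  rw [Fintype.card_fin] at f
  exact ⟨dvd_of_two_mul_mul_card_edgeFinset_turanGraph_eq hr0
    (f.card_edgeFinset_eq ▸ hedges), ⟨f⟩⟩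
end

section
/- For every p > 1 and n ≥ r ≥ 2, (1 - 1/r) n^2 - r/4 ≤ λ^(p)(T_r(n)) n^(2/p) ≤ (1 - 1/r) n^2. -/
/-!
If the vertex set is split into parts by a labelling `f` and `G.Adj i j ↔ f i ≠ f j`, the form
`∑ᵢ ∑ⱼ [i ~ j] xᵢ xⱼ` equals `S² - ∑ₐ Sₐ²`, where `Sₐ` is the sum of `x` over part `a` and `S` the
total sum. Cauchy–Schwarz over the `r` parts bounds it by `(1 - 1/r) S²`, and Hölder bounds `S²` by
`n^(2 - 2/p)` when `‖x‖ₚ = 1`. For the lower bound, evaluate at the constant vector `n^(-1/p)`: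
the form becomes `n^(-2/p) (n² - ∑ₐ cₐ²)` with part sizes `cₐ ∈ {⌊n/r⌋, ⌊n/r⌋ + 1}`, and numbers
confined to an interval of length one satisfy `∑ cₐ² ≤ (∑ cₐ)²/r + r/4`.
-/

open Finset

open scoped Classical

open SimpleGraph

section Inequalities

variable {ι : Type*}

lemma sq_sum_sub_sum_sq_le (s : Finset ι) (T : ι → ℝ) :
    (∑ k ∈ s, T k) ^ 2 - ∑ k ∈ s, T k ^ 2 ≤ (1 - 1 / #s) * (∑ k ∈ s, T k) ^ 2 := by
  have h : (∑ k ∈ s, T k) ^ 2 / #s ≤ ∑ k ∈ s, T k ^ 2 :=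
    div_le_of_le_mul₀ (Nat.cast_nonneg _) (sum_nonneg fun _ _ ↦ sq_nonneg _)
      (by simpa [mul_comm] using sq_sum_le_card_mul_sum_sq (s := s) (f := T))
  linarith [show (1 - 1 / (#s : ℝ)) * (∑ k ∈ s, T k) ^ 2
    = (∑ k ∈ s, T k) ^ 2 - (∑ k ∈ s, T k) ^ 2 / #s by ring]

lemma sum_sq_le_of_forall_mem_Icc {s : Finset ι} (hs : s.Nonempty) {c : ι → ℝ} {q : ℝ}
    (hc : ∀ k ∈ s, c k ∈ Set.Icc q (q + 1)) :
    ∑ k ∈ s, c k ^ 2 ≤ (∑ k ∈ s, c k) ^ 2 / #s + #s / 4 := by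
  have hm : (0 : ℝ) < #s := by exact_mod_cast hs.card_pos
  -- `(c - q) (c - q - 1) ≤ 0` makes `c²` at most linear in `c`.
  have hlin : ∑ k ∈ s, c k ^ 2 ≤ ∑ k ∈ s, ((2 * q + 1) * c k - q * (q + 1)) :=
    sum_le_sum fun k hk ↦ by nlinarith [(hc k hk).1, (hc k hk).2]
  rw [sum_sub_distrib, ← mul_sum, sum_const, nsmul_eq_mul] at hlin
  rw [div_add_div _ _ hm.ne' four_ne_zero, le_div_iff₀ (by positivity)]
  nlinarith [sq_nonneg (∑ k ∈ s, c k - #s * (q + 1 / 2))]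

lemma sum_abs_le_card_rpow [Fintype ι] {p : ℝ} (hp : 1 ≤ p) {x : ι → ℝ}
    (hx : ∑ i, |x i| ^ p = 1) : ∑ i, |x i| ≤ (Fintype.card ι : ℝ) ^ (1 - 1 / p) := by
  have hp0 : 0 < p := by linarith
  have hA : 0 ≤ ∑ i, |x i| := sum_nonneg fun _ _ ↦ abs_nonneg _
  rw [← Real.rpow_le_rpow_iff hA (by positivity) hp0, ← Real.rpow_mul (Nat.cast_nonneg _),
    show (1 - 1 / p) * p = p - 1 by field_simp]
  simpa [hx] using Real.rpow_sum_le_const_mul_sum_rpow univ x hp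

end Inequalities

section Form

variable {V : Type*} [Fintype V]

noncomputable def SimpleGraph.adjForm (G : SimpleGraph V) (x : V → ℝ) : ℝ :=
  ∑ i, ∑ j, if G.Adj i j then x i * x j else 0

lemma SimpleGraph.adjForm_const (G : SimpleGraph V) (a : ℝ) :
    G.adjForm (fun _ ↦ a) = a ^ 2 * G.adjForm 1 := by
  simp only [adjForm, mul_sum, Pi.one_apply, mul_one]
  refine sum_congr rfl fun i _ ↦ sum_congr rfl fun j _ ↦ ?_
  split_ifs <;> ring

lemma SimpleGraph.adjForm_eq_sq_sum_sub_sum_sq {α : Type*} [DecidableEq α] {G : SimpleGraph V}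
    (f : V → α) (hG : ∀ i j, G.Adj i j ↔ f i ≠ f j) {s : Finset α} (hs : ∀ i, f i ∈ s)
    (x : V → ℝ) :
    G.adjForm x = (∑ a ∈ s, ∑ i with f i = a, x i) ^ 2 - ∑ a ∈ s, (∑ i with f i = a, x i) ^ 2 := by
  have hsum : ∑ a ∈ s, ∑ i with f i = a, x i = ∑ i, x i :=
    sum_fiberwise_of_maps_to (fun i _ ↦ hs i) x
  have hdiag : ∑ a ∈ s, (∑ i with f i = a, x i) ^ 2
      = ∑ i, ∑ j, if f i = f j then x i * x j else 0 := by
    calc ∑ a ∈ s, (∑ i with f i = a, x i) ^ 2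
        = ∑ a ∈ s, ∑ i with f i = a, x i * ∑ j with f j = f i, x j := by
          refine sum_congr rfl fun a _ ↦ ?_
          rw [sq, sum_mul]
          exact sum_congr rfl fun i hi ↦ by rw [(mem_filter.1 hi).2, mul_comm]
      _ = ∑ i, x i * ∑ j with f j = f i, x j := sum_fiberwise_of_maps_to (fun i _ ↦ hs i) _
      _ = ∑ i, ∑ j, if f i = f j then x i * x j else 0 := by
          simp_rw [mul_sum, sum_filter, eq_comm]
  have hsplit : ∀ i j, (if G.Adj i j then x i * x j else 0)
      = x i * x j - if f i = f j then x i * x j else 0 := fun i j ↦ by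
    by_cases h : f i = f j <;> simp [hG, h]
  simp_rw [adjForm, hsplit, sum_sub_distrib, hdiag, hsum, sq, sum_mul_sum]

end Form

section PSpec

variable {V : Type*} [Fintype V] {G : SimpleGraph V} {p B : ℝ}

lemma pSpec_le (hne : ∃ x : V → ℝ, ∑ i, |x i| ^ p = 1)
    (hB : ∀ x : V → ℝ, ∑ i, |x i| ^ p = 1 → G.adjForm x ≤ B) : pSpec G p ≤ B := by
  obtain ⟨x, hx⟩ := hne
  exact csSup_le ⟨_, x, hx, rfl⟩ (by rintro _ ⟨x, hx, rfl⟩; exact hB x hx)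

lemma adjForm_le_pSpec (hB : ∀ x : V → ℝ, ∑ i, |x i| ^ p = 1 → G.adjForm x ≤ B)
    {x : V → ℝ} (hx : ∑ i, |x i| ^ p = 1) : G.adjForm x ≤ pSpec G p :=
  le_csSup ⟨B, by rintro _ ⟨x, hx, rfl⟩; exact hB x hx⟩ ⟨x, hx, rfl⟩

lemma sum_abs_rpow_inv_card_rpow_inv [Nonempty V] (hp : p ≠ 0) :
    ∑ _i : V, |((Fintype.card V : ℝ) ^ p⁻¹)⁻¹| ^ p = 1 := by
  have hn : (0 : ℝ) < Fintype.card V := by exact_mod_cast Fintype.card_pos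
  rw [abs_of_pos (by positivity), sum_const, card_univ, nsmul_eq_mul,
    Real.inv_rpow (by positivity), Real.rpow_inv_rpow hn.le hp, mul_inv_cancel₀ hn.ne']

end PSpec

section Turan

variable {n r : ℕ} {p : ℝ}

lemma adjForm_turanGraph (hr : 0 < r) (x : Fin n → ℝ) :
    (turanGraph n r).adjForm x = (∑ k ∈ range r, ∑ i with i.val % r = k, x i) ^ 2
      - ∑ k ∈ range r, (∑ i with i.val % r = k, x i) ^ 2 :=
  adjForm_eq_sq_sum_sub_sum_sq (fun i : Fin n ↦ i.val % r) (fun _ _ ↦ turanGraph_adj)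
    (fun _ ↦ mem_range.2 (Nat.mod_lt _ hr)) x

lemma card_filter_mod_eq (hr : 0 < r) {k : ℕ} (hk : k < r) :
    #{i : Fin n | i.val % r = k} = n / r + if k < n % r then 1 else 0 := by
  have hrange : #{i : Fin n | i.val % r = k} = #{m ∈ range n | m % r = k} := by
    rw [card_filter, card_filter]
    exact Fin.sum_univ_eq_sum_range (fun m ↦ if m % r = k then 1 else 0) n
  have hcount := Nat.count_modEq_card n hr k
  rw [Nat.count_eq_card_filter_range, Nat.mod_eq_of_lt hk] at hcount
  rw [hrange, ← hcount]
  congr 1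
  ext m
  simp [Nat.ModEq, Nat.mod_eq_of_lt hk]

lemma sum_sq_card_filter_mod_le (hr : 0 < r) :
    ∑ k ∈ range r, (#{i : Fin n | i.val % r = k} : ℝ) ^ 2 ≤ (n : ℝ) ^ 2 / r + r / 4 := by
  have htotal : ∑ k ∈ range r, (#{i : Fin n | i.val % r = k} : ℝ) = n := by
    rw [← Nat.cast_sum, ← card_eq_sum_card_fiberwise fun i _ ↦ mem_range.2 (Nat.mod_lt _ hr),
      card_univ, Fintype.card_fin]
  have hbal : ∀ k ∈ range r, (#{i : Fin n | i.val % r = k} : ℝ)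
      ∈ Set.Icc ((n / r : ℕ) : ℝ) ((n / r : ℕ) + 1) := fun k hk ↦ by
    rw [card_filter_mod_eq hr (mem_range.1 hk)]
    split_ifs <;> simp
  simpa [htotal] using sum_sq_le_of_forall_mem_Icc (nonempty_range_iff.2 hr.ne') hbal

lemma adjForm_turanGraph_le (hr : 0 < r) (hp : 1 ≤ p) {x : Fin n → ℝ}
    (hx : ∑ i, |x i| ^ p = 1) :
    (turanGraph n r).adjForm x ≤ (1 - 1 / r) * ((n : ℝ) ^ (1 - 1 / p)) ^ 2 := by
  have hfrac : (0 : ℝ) ≤ 1 - 1 / r := by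
    rw [sub_nonneg, div_le_one (by positivity)]
    exact_mod_cast hr
  have hsum : ∑ k ∈ range r, ∑ i with i.val % r = k, x i = ∑ i, x i :=
    sum_fiberwise_of_maps_to (fun i _ ↦ mem_range.2 (Nat.mod_lt _ hr)) x
  have hHolder : (∑ i, x i) ^ 2 ≤ ((n : ℝ) ^ (1 - 1 / p)) ^ 2 := by
    rw [← sq_abs]
    have := sum_abs_le_card_rpow hp hx
    rw [Fintype.card_fin] at this
    gcongr
    exact (abs_sum_le_sum_abs _ _).trans this
  calc (turanGraph n r).adjForm x
      ≤ (1 - 1 / r) * (∑ i, x i) ^ 2 := by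
        rw [adjForm_turanGraph hr, ← hsum]
        simpa using sq_sum_sub_sum_sq_le (range r) _
    _ ≤ (1 - 1 / r) * ((n : ℝ) ^ (1 - 1 / p)) ^ 2 := by gcongr

lemma pSpec_turanGraph_mul_rpow_le (hr : 0 < r) (hn : 0 < n) (hp : 1 ≤ p) :
    pSpec (turanGraph n r) p * (n : ℝ) ^ (2 / p) ≤ (1 - 1 / (r : ℝ)) * (n : ℝ) ^ 2 := by
  have : Nonempty (Fin n) := ⟨⟨0, hn⟩⟩
  have hn' : (0 : ℝ) < n := by exact_mod_cast hn
  have hadm := sum_abs_rpow_inv_card_rpow_inv (V := Fin n) (p := p) (by positivity)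
  have hbound := pSpec_le (G := turanGraph n r) ⟨_, hadm⟩ fun _ hx ↦ adjForm_turanGraph_le hr hp hx
  have hexp : ((n : ℝ) ^ (1 - 1 / p)) ^ 2 * (n : ℝ) ^ (2 / p) = (n : ℝ) ^ 2 := by
    rw [← Real.rpow_mul_natCast hn'.le, ← Real.rpow_add hn', ← Real.rpow_natCast]
    congr 1
    push_cast
    ring
  calc pSpec (turanGraph n r) p * (n : ℝ) ^ (2 / p)
      ≤ (1 - 1 / r) * ((n : ℝ) ^ (1 - 1 / p)) ^ 2 * (n : ℝ) ^ (2 / p) := by gcongr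
    _ = (1 - 1 / r) * (n : ℝ) ^ 2 := by rw [mul_assoc, hexp]

lemma le_pSpec_turanGraph_mul_rpow (hr : 0 < r) (hn : 0 < n) (hp : 1 ≤ p) :
    (1 - 1 / (r : ℝ)) * (n : ℝ) ^ 2 - r / 4 ≤ pSpec (turanGraph n r) p * (n : ℝ) ^ (2 / p) := by
  have : Nonempty (Fin n) := ⟨⟨0, hn⟩⟩
  have hn' : (0 : ℝ) < n := by exact_mod_cast hn
  set a : ℝ := ((n : ℝ) ^ p⁻¹)⁻¹
  have hadm : ∑ _i : Fin n, |a| ^ p = 1 := by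
    simpa only [Fintype.card_fin] using
      sum_abs_rpow_inv_card_rpow_inv (V := Fin n) (p := p) (by positivity)
  have hform : (turanGraph n r).adjForm (fun _ ↦ a)
      = a ^ 2 * ((n : ℝ) ^ 2 - ∑ k ∈ range r, (#{i : Fin n | i.val % r = k} : ℝ) ^ 2) := by
    rw [adjForm_const, adjForm_turanGraph hr]
    simp only [Pi.one_apply, sum_const, nsmul_one]
    rw [← Nat.cast_sum, ← card_eq_sum_card_fiberwise fun i _ ↦ mem_range.2 (Nat.mod_lt _ hr),
      card_univ, Fintype.card_fin]
  have hscale : a ^ 2 * (n : ℝ) ^ (2 / p) = 1 := by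
    rw [show 2 / p = p⁻¹ * (2 : ℕ) by push_cast; ring, Real.rpow_mul_natCast hn'.le, ← mul_pow,
      inv_mul_cancel₀ (by positivity), one_pow]
  have hlow := adjForm_le_pSpec (fun _ hx ↦ adjForm_turanGraph_le hr hp hx) hadm
  rw [hform] at hlow
  have hparts := sum_sq_card_filter_mod_le (n := n) hr
  calc (1 - 1 / (r : ℝ)) * (n : ℝ) ^ 2 - r / 4
      ≤ (n : ℝ) ^ 2 - ∑ k ∈ range r, (#{i : Fin n | i.val % r = k} : ℝ) ^ 2 := by
        have : (1 - 1 / (r : ℝ)) * (n : ℝ) ^ 2 = (n : ℝ) ^ 2 - (n : ℝ) ^ 2 / r := by ring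
        linarith
    _ = a ^ 2 * ((n : ℝ) ^ 2 - ∑ k ∈ range r, (#{i : Fin n | i.val % r = k} : ℝ) ^ 2)
          * (n : ℝ) ^ (2 / p) := by rw [mul_right_comm, hscale, one_mul]
    _ ≤ pSpec (turanGraph n r) p * (n : ℝ) ^ (2 / p) := by gcongr

end Turan

theorem stmt11 (r n : ℕ) (hr : 2 ≤ r) (hn : r ≤ n) (p : ℝ) (hp : 1 < p) :
    (1 - 1 / (r : ℝ)) * (n : ℝ) ^ 2 - (r : ℝ) / 4 ≤
        pSpec (SimpleGraph.turanGraph n r) p * (n : ℝ) ^ (2 / p) ∧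
      pSpec (SimpleGraph.turanGraph n r) p * (n : ℝ) ^ (2 / p) ≤
        (1 - 1 / (r : ℝ)) * (n : ℝ) ^ 2 :=
  ⟨le_pSpec_turanGraph_mul_rpow (by omega) (by omega) hp.le,
    pSpec_turanGraph_mul_rpow_le (by omega) (by omega) hp.le⟩
end
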